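/- arXiv:1906.01056 — 3 statements merged into one kernel-verified Lean document; each statement's English description precedes it below -/
import Mathlib

section
/- Let G be a connected chordal graph and let u, v be non-adjacent vertices. If the induced subgraph G[V − I_{u,v}] has no path from u to v, where I_{u,v} = N(u) ∩ N(v), then the graph G + {u,v} obtained by adding the edge uv is chordal. -/
open SimpleGraph

/-- `G` has an induced (chordless) cycle of length `n`. -/
def HasInducedCycle {V : Type*} (G : SimpleGraph V) (n : ℕ) : Prop :=
  Nonempty (SimpleGraph.cycleGraph n ↪g G)

/-- `G` is chordal: it has no induced cycle of length 4 or more. -/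
def Chordal {V : Type*} (G : SimpleGraph V) : Prop :=
  ∀ n, 4 ≤ n → ¬ HasInducedCycle G n

/-- `G` is weakly chordal: neither `G` nor its complement has an induced cycle
of length 5 or more. -/
def WeaklyChordal {V : Type*} (G : SimpleGraph V) : Prop :=
  (∀ n, 5 ≤ n → ¬ HasInducedCycle G n) ∧ (∀ n, 5 ≤ n → ¬ HasInducedCycle Gᶜ n)

/-- `G` has an induced (chordless) path of length `ℓ` (i.e. with `ℓ` edges)
from `u` to `v`. -/
def HasInducedPath {V : Type*} (G : SimpleGraph V) (u v : V) (ℓ : ℕ) : Prop :=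
  ∃ f : SimpleGraph.pathGraph (ℓ + 1) ↪g G, f 0 = u ∧ f (Fin.last ℓ) = v

/-!
An induced cycle of length at least four in `G + uv` must use the new edge, since `G` is chordal.
Deleting that edge leaves an induced `u`–`v` path of length at least three in `G`. On such a path
no vertex is adjacent to both endpoints, so the path avoids `N(u) ∩ N(v)` and joins `u` to `v` in
`G[V − I_{u,v}]`.
-/

namespace SimpleGraph

variable {V W : Type*} {G : SimpleGraph V} {u v : V}

lemma pathGraph_adj_iff_cycleGraph_adj_and_ne {n : ℕ} {i j : Fin (n + 3)} :
    (pathGraph (n + 3)).Adj i j ↔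
      (cycleGraph (n + 3)).Adj i j ∧ s(i, j) ≠ s(0, Fin.last (n + 2)) := by
  simp only [pathGraph_adj, cycleGraph_adj', Ne, Sym2.eq_iff, Fin.ext_iff]
  grind [Fin.coe_sub_iff_le, Fin.coe_sub_iff_lt]

def cycleGraph.addLeftIso (n : ℕ) (a : Fin (n + 2)) :
    cycleGraph (n + 2) ≃g cycleGraph (n + 2) where
  toEquiv := Equiv.addLeft a
  map_rel_iff' := by simp [cycleGraph_adj]

def cycleGraph.subLeftIso (n : ℕ) (a : Fin (n + 2)) :
    cycleGraph (n + 2) ≃g cycleGraph (n + 2) where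
  toEquiv := Equiv.subLeft a
  map_rel_iff' := by simp [cycleGraph_adj, sub_sub_sub_cancel_left, or_comm]

lemma exists_cycleGraph_embedding_of_adj {n : ℕ} {H : SimpleGraph W}
    (f : cycleGraph (n + 2) ↪g H) {a b : Fin (n + 2)} (hab : (cycleGraph (n + 2)).Adj a b) :
    ∃ g : cycleGraph (n + 2) ↪g H, g 0 = f a ∧ g (Fin.last (n + 1)) = f b := by
  have hlast : (Fin.last (n + 1) : Fin (n + 2)) = -1 := neg_eq_iff_eq_neg.mp (Fin.neg_last _)
  rcases hab with hab | hab
  · refine ⟨f.comp (cycleGraph.addLeftIso n a).toEmbedding, ?_, ?_⟩ <;>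
      simp [cycleGraph.addLeftIso, hlast, ← hab]
  · refine ⟨f.comp (cycleGraph.subLeftIso n a).toEmbedding, ?_, ?_⟩ <;>
      simp [cycleGraph.subLeftIso, hlast, ← hab]

lemma adj_iff_sup_edge_adj_and_ne (huv : ¬ G.Adj u v) {x y : V} :
    G.Adj x y ↔ (G ⊔ edge u v).Adj x y ∧ s(x, y) ≠ s(u, v) := by
  simp only [sup_adj, edge_adj, ne_eq, Sym2.eq_iff]
  grind [Adj.symm]

lemma Embedding.exists_eq_of_sup_edge {H : SimpleGraph W} (f : H ↪g G ⊔ edge u v)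
    (h : ¬ (u ∈ Set.range f ∧ v ∈ Set.range f)) : ∃ g : H ↪g G, ⇑g = ⇑f := by
  refine ⟨⟨f.toEmbedding, fun {x y} => ?_⟩, rfl⟩
  refine ⟨fun hxy => f.map_adj_iff.mp (Or.inl hxy), fun hxy => ?_⟩
  have hxy' := f.map_adj_iff.mpr hxy
  rw [sup_adj, edge_adj] at hxy'
  rcases hxy' with hG | ⟨⟨hx, hy⟩ | ⟨hx, hy⟩, -⟩
  · exact hG
  · exact (h ⟨⟨x, hx⟩, ⟨y, hy⟩⟩).elim
  · exact (h ⟨⟨y, hy⟩, ⟨x, hx⟩⟩).elim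

lemma hasInducedPath_of_cycleGraph_sup_edge {n : ℕ} (huv : ¬ G.Adj u v)
    (f : cycleGraph (n + 3) ↪g G ⊔ edge u v) (h0 : f 0 = u) (hl : f (Fin.last (n + 2)) = v) :
    HasInducedPath G u v (n + 2) := by
  refine ⟨⟨f.toEmbedding, fun {i j} => ?_⟩, h0, hl⟩
  have hend : s(i, j) = s(0, Fin.last (n + 2)) ↔ s(f i, f j) = s(f 0, f (Fin.last (n + 2))) := by
    rw [← Sym2.map_mk, ← Sym2.map_mk, (Sym2.map.injective f.injective).eq_iff]
  rw [h0, hl] at hend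
  rw [pathGraph_adj_iff_cycleGraph_adj_and_ne, ← f.map_adj_iff, Ne, hend]
  exact adj_iff_sup_edge_adj_and_ne huv

lemma Preconnected.reachable_induce_of_hom {H : SimpleGraph W} (hH : H.Preconnected)
    (φ : H →g G) {s : Set V} (hs : ∀ x, φ x ∈ s) (x y : W) :
    (G.induce s).Reachable ⟨φ x, hs x⟩ ⟨φ y, hs y⟩ :=
  (hH x y).map (⟨fun x => ⟨φ x, hs x⟩, φ.map_adj⟩ : H →g G.induce s)

lemma not_hasInducedPath_of_not_reachable {ℓ : ℕ} (hℓ : ℓ ≠ 2)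
    (hsep : ¬ (G.induce ((G.neighborSet u ∩ G.neighborSet v)ᶜ)).Reachable
      ⟨u, fun h => G.irrefl h.1⟩ ⟨v, fun h => G.irrefl h.2⟩) :
    ¬ HasInducedPath G u v ℓ := by
  rintro ⟨f, rfl, rfl⟩
  have hf : ∀ i, f i ∈ (G.neighborSet (f 0) ∩ G.neighborSet (f (Fin.last ℓ)))ᶜ := by
    rintro i ⟨h0, hl⟩
    have h0 := pathGraph_adj.mp (f.map_adj_iff.mp h0)
    have hl := pathGraph_adj.mp (f.map_adj_iff.mp hl)
    simp only [Fin.val_zero, Fin.val_last] at h0 hl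
    omega
  exact hsep ((pathGraph_preconnected _).reachable_induce_of_hom f.toHom hf 0 (Fin.last ℓ))

end SimpleGraph

theorem add_edge_chordal_general {V : Type*} (G : SimpleGraph V)
    (hch : Chordal G) (u v : V) (huv : ¬ G.Adj u v)
    (hsep : ¬ (G.induce ((G.neighborSet u ∩ G.neighborSet v)ᶜ)).Reachable
      ⟨u, fun h => G.irrefl h.1⟩ ⟨v, fun h => G.irrefl h.2⟩) :
    Chordal (G ⊔ SimpleGraph.edge u v) := by
  have hne : u ≠ v := by
    rintro rfl
    exact hsep (Reachable.refl _)
  rintro n hn ⟨f⟩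
  by_cases hrange : u ∈ Set.range f ∧ v ∈ Set.range f
  · obtain ⟨⟨a, hfa⟩, ⟨b, hfb⟩⟩ := hrange
    obtain ⟨m, rfl⟩ : ∃ m, n = m + 4 := ⟨n - 4, by omega⟩
    have hab : (cycleGraph (m + 4)).Adj a b := by
      rw [← f.map_adj_iff, hfa, hfb, sup_adj, edge_adj]
      exact Or.inr ⟨Or.inl ⟨rfl, rfl⟩, hne⟩
    obtain ⟨g, hg0, hgl⟩ := exists_cycleGraph_embedding_of_adj f hab
    exact not_hasInducedPath_of_not_reachable (by omega) hsep
      (hasInducedPath_of_cycleGraph_sup_edge huv g (hg0.trans hfa) (hgl.trans hfb))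
  · obtain ⟨g, -⟩ := Embedding.exists_eq_of_sup_edge f hrange
    exact hch n hn ⟨g⟩

/-- Markenzon's criterion, "if" direction: if `G` is a connected chordal graph,
`u, v` are non-adjacent, and removing the common neighborhood
`I = N(u) ∩ N(v)` leaves `u` and `v` in different components, then
`G + {u,v}` is chordal. -/
theorem add_edge_chordal {V : Type*} (G : SimpleGraph V) (hconn : G.Connected)
    (hch : Chordal G) (u v : V) (hne : u ≠ v) (huv : ¬ G.Adj u v)
    (hsep : ¬ (G.induce ((G.neighborSet u ∩ G.neighborSet v)ᶜ)).Reachable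
      ⟨u, fun h => G.irrefl h.1⟩ ⟨v, fun h => G.irrefl h.2⟩) :
    Chordal (G ⊔ SimpleGraph.edge u v) :=
  add_edge_chordal_general G hch u v huv hsep
end

section
/- Let G be a connected chordal graph and let u, v be non-adjacent vertices. If the induced subgraph G[V − I_{u,v}] contains a path from u to v, where I_{u,v} = N(u) ∩ N(v), then G + {u,v} is not chordal. -/
/-!
A shortest `u`–`v` walk in `G[V − I_{u,v}]` is an induced path of that graph, hence of `G`.
It has length at least `3`: `u` and `v` are distinct, non-adjacent, and every common neighbour
of `u` and `v` lies in `I_{u,v}`. Closing the path with the new edge `uv` gives an induced cycle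
of length at least `4` in `G + {u,v}`.
-/

open SimpleGraph

theorem SimpleGraph.cycleGraph_eq_pathGraph_sup_edge (n : ℕ) :
    cycleGraph (n + 1) = pathGraph (n + 1) ⊔ edge 0 (Fin.last n) := by
  have hmod (x : ℕ) (hx : x < 2 * (n + 1)) :
      x % (n + 1) = if x < n + 1 then x else x - (n + 1) := by
    split_ifs with h
    · exact Nat.mod_eq_of_lt h
    · rw [Nat.mod_eq_sub_mod (by omega), Nat.mod_eq_of_lt (by omega)]
  ext ⟨i, hi⟩ ⟨j, hj⟩
  simp only [cycleGraph_adj', sup_adj, pathGraph_adj, edge_adj, Fin.sub_def, Fin.ext_iff,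
    Fin.val_last, Fin.val_zero, ne_eq]
  rw [hmod _ (by omega), hmod _ (by omega)]
  split_ifs <;> omega

section

variable {V W : Type*} {G : SimpleGraph V} {H : SimpleGraph W}

namespace SimpleGraph

def Embedding.supEdge (f : H ↪g G) (x y : W) : H ⊔ edge x y ↪g G ⊔ edge (f x) (f y) where
  toEmbedding := f.toEmbedding
  map_rel_iff' := by
    simp only [sup_adj, edge_adj, RelEmbedding.coe_toEmbedding, f.map_adj_iff, f.injective.eq_iff,
      f.injective.ne_iff, implies_true]

theorem two_lt_edist_induce_compl_commonNeighbors {u v : V} (hne : u ≠ v) (huv : ¬G.Adj u v) :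
    2 < (G.induce (G.commonNeighbors u v)ᶜ).edist
      ⟨u, G.notMem_commonNeighbors_left u v⟩ ⟨v, G.notMem_commonNeighbors_right u v⟩ := by
  refine two_lt_edist_iff.mpr ⟨by simpa using hne, huv, ?_⟩
  refine Set.eq_empty_of_forall_notMem fun ⟨w, hw⟩ hmem ↦ hw ?_
  simpa [mem_commonNeighbors] using hmem

namespace Walk

variable {a b : V}

theorem sub_le_edist_getVert {p : G.Walk a b} (hp : p.length = G.edist a b) {i j : ℕ}
    (hij : i ≤ j) (hj : j ≤ p.length) :
    ((j - i : ℕ) : ℕ∞) ≤ G.edist (p.getVert i) (p.getVert j) := by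
  have hfront : G.edist a (p.getVert i) ≤ i := by
    simpa [hij.trans hj] using (p.take i).edist_le
  have hback : G.edist (p.getVert j) b ≤ (p.length - j : ℕ) := by
    simpa using (p.drop j).edist_le
  have hsum : (p.length : ℕ∞) ≤ i + (G.edist (p.getVert i) (p.getVert j) + (p.length - j : ℕ)) :=
    calc (p.length : ℕ∞) = G.edist a b := hp
      _ ≤ G.edist a (p.getVert i) + G.edist (p.getVert i) b := SimpleGraph.edist_triangle
      _ ≤ G.edist a (p.getVert i) + (G.edist (p.getVert i) (p.getVert j)
            + G.edist (p.getVert j) b) := by gcongr; exact SimpleGraph.edist_triangle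
      _ ≤ _ := by gcongr
  generalize G.edist (p.getVert i) (p.getVert j) = d at hsum
  induction d using ENat.recTopCoe with
  | top => exact le_top
  | coe d => norm_cast at hsum ⊢; omega

theorem injOn_getVert_of_length_eq_edist {p : G.Walk a b} (hp : p.length = G.edist a b) :
    Set.InjOn p.getVert (Set.Iic p.length) := by
  intro i hi j hj h
  wlog hij : i ≤ j generalizing i j
  · exact (this hj hi h.symm (by omega)).symm
  have := p.sub_le_edist_getVert hp hij hj
  rw [h, edist_self] at this
  norm_cast at this
  omega

theorem adj_getVert_iff_of_length_eq_edist {p : G.Walk a b} (hp : p.length = G.edist a b)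
    {i j : ℕ} (hi : i ≤ p.length) (hj : j ≤ p.length) :
    G.Adj (p.getVert i) (p.getVert j) ↔ i + 1 = j ∨ j + 1 = i := by
  refine ⟨fun h ↦ ?_, ?_⟩
  · wlog hij : i ≤ j generalizing i j
    · exact (this hj hi h.symm (by omega)).symm
    have := p.sub_le_edist_getVert hp hij hj
    rw [edist_eq_one_iff_adj.mpr h] at this
    norm_cast at this
    have : i ≠ j := by rintro rfl; exact G.irrefl h
    omega
  · rintro (h | h)
    · exact h ▸ p.adj_getVert_succ (by omega)
    · exact (h ▸ p.adj_getVert_succ (by omega)).symm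

theorem hasInducedPath_of_length_eq_edist (p : G.Walk a b) (hp : p.length = G.edist a b) :
    HasInducedPath G a b p.length := by
  refine ⟨⟨⟨fun i ↦ p.getVert i, fun i j h ↦ ?_⟩, fun {i j} ↦ ?_⟩, p.getVert_zero, p.getVert_length⟩
  · exact Fin.ext (p.injOn_getVert_of_length_eq_edist hp (by simp; omega) (by simp; omega) h)
  · exact (p.adj_getVert_iff_of_length_eq_edist hp (by omega) (by omega)).trans pathGraph_adj.symm

end Walk

end SimpleGraph

theorem HasInducedPath.map {a b : W} {ℓ : ℕ} (h : HasInducedPath H a b ℓ) (e : H ↪g G) :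
    HasInducedPath G (e a) (e b) ℓ := by
  obtain ⟨f, rfl, rfl⟩ := h
  exact ⟨f.trans e, rfl, rfl⟩

theorem HasInducedPath.hasInducedCycle_sup_edge {a b : V} {ℓ : ℕ} (h : HasInducedPath G a b ℓ) :
    HasInducedCycle (G ⊔ edge a b) (ℓ + 1) := by
  obtain ⟨f, rfl, rfl⟩ := h
  rw [HasInducedCycle, cycleGraph_eq_pathGraph_sup_edge]
  exact ⟨f.supEdge _ _⟩

end

theorem add_edge_not_chordal_general {V : Type*} (G : SimpleGraph V)
    (u v : V) (hne : u ≠ v) (huv : ¬ G.Adj u v)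
    (hreach : (G.induce ((G.neighborSet u ∩ G.neighborSet v)ᶜ)).Reachable
      ⟨u, fun h => G.irrefl h.1⟩ ⟨v, fun h => G.irrefl h.2⟩) :
    ¬ Chordal (G ⊔ SimpleGraph.edge u v) := by
  intro hchordal
  obtain ⟨p, hp⟩ := hreach.exists_walk_length_eq_edist
  -- `G.commonNeighbors u v` is by definition `G.neighborSet u ∩ G.neighborSet v`.
  have hlen : 3 ≤ p.length := by
    have := hp ▸ two_lt_edist_induce_compl_commonNeighbors hne huv
    exact_mod_cast this
  exact hchordal _ (by omega)
    ((p.hasInducedPath_of_length_eq_edist hp).map (Embedding.induce _)).hasInducedCycle_sup_edge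

/-- Markenzon's criterion, "only if" direction: if `G` is a connected chordal
graph, `u, v` are non-adjacent, and `u` and `v` are still connected after
removing the common neighborhood `I = N(u) ∩ N(v)`, then `G + {u,v}` is not
chordal. -/
theorem add_edge_not_chordal {V : Type*} (G : SimpleGraph V) (hconn : G.Connected)
    (hch : Chordal G) (u v : V) (hne : u ≠ v) (huv : ¬ G.Adj u v)
    (hreach : (G.induce ((G.neighborSet u ∩ G.neighborSet v)ᶜ)).Reachable
      ⟨u, fun h => G.irrefl h.1⟩ ⟨v, fun h => G.irrefl h.2⟩) :
    ¬ Chordal (G ⊔ SimpleGraph.edge u v) :=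
  add_edge_not_chordal_general G u v hne huv hreach
end

section
/- For any two non-adjacent vertices u, v in a graph G, if G + uv is weakly chordal and G is weakly chordal, and every induced u–v path in G has length 2 or 3, then any two induced u–v paths of length 3 in G that are internally disjoint must have an edge between their internal vertex sets. -/
/-!
Assume no edge joins `{x, y}` to `{x', y'}`. Then `u x y v y' x'` is a chordless 6-cycle of `G`:
its six edges are the edges of the two paths, and each of its nine chords is excluded either by
one of the paths being induced, by `¬ G.Adj u v`, or by the assumption. This contradicts the
weak chordality of `G`.
-/

open SimpleGraph

namespace SimpleGraph

variable {V W : Type*} {G : SimpleGraph V} {H : SimpleGraph W}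

lemma injective_of_adj_iff {f : W → V} (hf : ∀ a b, G.Adj (f a) (f b) ↔ H.Adj a b)
    (hH : ∀ a b, (∀ c, H.Adj a c ↔ H.Adj b c) → a = b) : Function.Injective f :=
  fun a b hab => hH a b fun c => by rw [← hf, ← hf, hab]

def Embedding.ofAdjIff (f : W → V) (hf : ∀ a b, G.Adj (f a) (f b) ↔ H.Adj a b)
    (hH : ∀ a b, (∀ c, H.Adj a c ↔ H.Adj b c) → a = b) : H ↪g G :=
  ⟨⟨f, injective_of_adj_iff hf hH⟩, hf _ _⟩

lemma cycleGraph_six_eq_of_forall_adj_iff :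
    ∀ a b : Fin 6, (∀ c, (cycleGraph 6).Adj a c ↔ (cycleGraph 6).Adj b c) → a = b := by
  decide

end SimpleGraph

lemma hasInducedCycle_six {V : Type*} {G : SimpleGraph V} {a₀ a₁ a₂ a₃ a₄ a₅ : V}
    (h₀₁ : G.Adj a₀ a₁) (h₁₂ : G.Adj a₁ a₂) (h₂₃ : G.Adj a₂ a₃)
    (h₃₄ : G.Adj a₃ a₄) (h₄₅ : G.Adj a₄ a₅) (h₅₀ : G.Adj a₅ a₀)
    (h₀₂ : ¬ G.Adj a₀ a₂) (h₀₃ : ¬ G.Adj a₀ a₃) (h₀₄ : ¬ G.Adj a₀ a₄)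
    (h₁₃ : ¬ G.Adj a₁ a₃) (h₁₄ : ¬ G.Adj a₁ a₄) (h₁₅ : ¬ G.Adj a₁ a₅)
    (h₂₄ : ¬ G.Adj a₂ a₄) (h₂₅ : ¬ G.Adj a₂ a₅) (h₃₅ : ¬ G.Adj a₃ a₅) :
    HasInducedCycle G 6 := by
  -- The `aᵢ` are automatically distinct: vertices of `C₆` are separated by their neighbourhoods.
  refine ⟨Embedding.ofAdjIff ![a₀, a₁, a₂, a₃, a₄, a₅] ?_ cycleGraph_six_eq_of_forall_adj_iff⟩
  intro i j
  fin_cases i <;> fin_cases j <;>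
    simp only [Fin.reduceFinMk, Fin.isValue, Matrix.cons_val, SimpleGraph.irrefl] <;>
    first
      | exact iff_of_true (by assumption) (by decide)
      | exact iff_of_true (G.adj_symm ‹_›) (by decide)
      | exact iff_of_false (by assumption) (by decide)
      | exact iff_of_false (mt G.adj_symm ‹_›) (by decide)

theorem internally_disjoint_P3s_have_cross_edge_general {V : Type*} (G : SimpleGraph V)
    (u v x y x' y' : V)
    (hwcG : WeaklyChordal G)
    (huv : ¬ G.Adj u v)
    -- first induced path u–x–y–v
    (hux : G.Adj u x) (hxy : G.Adj x y) (hyv : G.Adj y v)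
    (huy : ¬ G.Adj u y) (hxv : ¬ G.Adj x v)
    -- second induced path u–x'–y'–v
    (hux' : G.Adj u x') (hxy' : G.Adj x' y') (hyv' : G.Adj y' v)
    (huy' : ¬ G.Adj u y') (hxv' : ¬ G.Adj x' v) :
    G.Adj x x' ∨ G.Adj x y' ∨ G.Adj y x' ∨ G.Adj y y' := by
  by_contra! hcross
  obtain ⟨hnxx', hnxy', hnyx', hnyy'⟩ := hcross
  exact hwcG.1 6 (by norm_num) <| hasInducedCycle_six hux hxy hyv hyv'.symm hxy'.symm hux'.symm
    huy huv huy' hxv hnxy' hnxx' hnyy' hnyx' (fun h => hxv' h.symm)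

/-- If `G` and `G + uv` are both weakly chordal, `u, v` are non-adjacent, and
every induced `u`–`v` path in `G` has length 2 or 3, then any two internally
disjoint induced `u`–`v` paths of length 3, `u–x–y–v` and `u–x'–y'–v`, must
have an edge between their internal vertex sets `{x,y}` and `{x',y'}`. -/
theorem internally_disjoint_P3s_have_cross_edge {V : Type*} (G : SimpleGraph V)
    (u v x y x' y' : V)
    (hwcG : WeaklyChordal G)
    (hwcG' : WeaklyChordal (G ⊔ SimpleGraph.edge u v))
    (hne : u ≠ v) (huv : ¬ G.Adj u v)
    (h23 : ∀ ℓ, HasInducedPath G u v ℓ → ℓ = 2 ∨ ℓ = 3)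
    -- first induced path u–x–y–v
    (hux : G.Adj u x) (hxy : G.Adj x y) (hyv : G.Adj y v)
    (huy : ¬ G.Adj u y) (hxv : ¬ G.Adj x v)
    -- second induced path u–x'–y'–v
    (hux' : G.Adj u x') (hxy' : G.Adj x' y') (hyv' : G.Adj y' v)
    (huy' : ¬ G.Adj u y') (hxv' : ¬ G.Adj x' v)
    -- internally disjoint: {x, y} ∩ {x', y'} = ∅
    (hxx' : x ≠ x') (hxy2 : x ≠ y') (hyx' : y ≠ x') (hyy' : y ≠ y') :
    G.Adj x x' ∨ G.Adj x y' ∨ G.Adj y x' ∨ G.Adj y y' :=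
  internally_disjoint_P3s_have_cross_edge_general G u v x y x' y' hwcG huv hux hxy hyv huy hxv hux'
    hxy' hyv' huy' hxv'
end
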